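/- The restriction of the progress right pro-congruence ≈ᵘ_N to C_u × C_u is transitive (hence an equivalence relation on C_u), where C_u = {v ∈ Σ* : u·v ∼ u}. -/
import Mathlib


/-- Concatenation of a finite word `u` with an ω-word `w`. -/
def finCat {α : Type*} (u : List α) (w : ℕ → α) : ℕ → α :=
  fun n => if h : n < u.length then u.get ⟨n, h⟩ else w (n - u.length)

/-- The ω-word `v^ω`, the infinite repetition of a nonempty finite word `v`. -/
def repWord {α : Type*} (v : List α) (h : 0 < v.length) : ℕ → α :=
  fun n => v.get ⟨n % v.length, Nat.mod_lt n h⟩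

/-- `u · v^ω ∈ L` (this requires `v` to be nonempty). -/
def OmegaIn {α : Type*} (L : Set (ℕ → α)) (u v : List α) : Prop :=
  ∃ h : 0 < v.length, finCat u (repWord v h) ∈ L

/-- The leading right congruence `u₁ ∼ u₂`. -/
def Leading {α : Type*} (L : Set (ℕ → α)) (u₁ u₂ : List α) : Prop :=
  ∀ w : ℕ → α, finCat u₁ w ∈ L ↔ finCat u₂ w ∈ L

/-- The limit progress relation `x ≈ᵘ_L y`. -/
def LimitRel {α : Type*} (L : Set (ℕ → α)) (u x y : List α) : Prop :=
  ∀ v : List α,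
    (Leading L (u ++ x ++ v) u → OmegaIn L u (x ++ v)) ↔
    (Leading L (u ++ y ++ v) u → OmegaIn L u (y ++ v))

/-- The syntactic progress relation `x ≈ᵘ_S y`. -/
def SynRel {α : Type*} (L : Set (ℕ → α)) (u x y : List α) : Prop :=
  Leading L (u ++ x) (u ++ y) ∧
  ∀ v : List α, Leading L (u ++ x ++ v) u →
    (OmegaIn L u (x ++ v) ↔ OmegaIn L u (y ++ v))

/-- The periodic progress relation `x ≈ᵘ_P y`. -/
def PerRel {α : Type*} (L : Set (ℕ → α)) (u x y : List α) : Prop :=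
  ∀ v : List α, OmegaIn L u (x ++ v) ↔ OmegaIn L u (y ++ v)

/-- The recurrent progress relation `x ≈ᵘ_R y`. -/
def RecRel {α : Type*} (L : Set (ℕ → α)) (u x y : List α) : Prop :=
  ∀ v : List α,
    (Leading L (u ++ x ++ v) u ∧ OmegaIn L u (x ++ v)) ↔
    (Leading L (u ++ y ++ v) u ∧ OmegaIn L u (y ++ v))

/-- The progress right pro-congruence `x ≈ᵘ_N y`. -/
def ProRel {α : Type*} (L : Set (ℕ → α)) (u x y : List α) : Prop :=
  ∀ v : List α,
    (Leading L (u ++ x ++ v) u ∧ Leading L (u ++ y ++ v) u) →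
    (OmegaIn L u (x ++ v) ↔ OmegaIn L u (y ++ v))


lemma finCat_append {α : Type*} (a b : List α) (w : ℕ → α) :
    finCat (a ++ b) w = finCat a (finCat b w) := by
  funext n
  simp only [finCat, List.length_append]
  by_cases h1 : n < a.length
  · simp [h1, Nat.lt_of_lt_of_le h1 (Nat.le_add_right _ _), List.getElem_append, h1]
  · have hna : a.length ≤ n := Nat.le_of_not_lt h1
    by_cases h2 : n < a.length + b.length
    · have h3 : n - a.length < b.length := by omega
      simp only [h2, dif_pos, h1, dif_neg, h3, List.get_eq_getElem]
      rw [List.getElem_append_right hna]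
      simp
    · have h3 : ¬ n - a.length < b.length := by omega
      simp only [h2, dif_neg, h1, h3, dite_false]
      congr 1
      omega

lemma leading_append {α : Type*} (L : Set (ℕ → α)) (u x : List α)
    (h : Leading L (u ++ x) u) (v : List α) :
    ∀ w, (finCat (u ++ x ++ v) w ∈ L ↔ finCat (u ++ v) w ∈ L) := by
  intro w
  rw [show u ++ x ++ v = (u ++ x) ++ v from rfl, finCat_append (u ++ x) v,
    finCat_append u v]
  exact h _

theorem proRel_transitive_on_Cu {α : Type*} (L : Set (ℕ → α)) (u x y z : List α)
    (hx : Leading L (u ++ x) u) (hy : Leading L (u ++ y) u) (hz : Leading L (u ++ z) u)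
    (hxy : ProRel L u x y) (hyz : ProRel L u y z) :
    ProRel L u x z := by
  intro v ⟨hxv, hzv⟩
  have hyv : Leading L (u ++ y ++ v) u := by
    intro w
    rw [leading_append L u y hy v w, ← leading_append L u x hx v w]
    exact hxv w
  exact (hxy v ⟨hxv, hyv⟩).trans (hyz v ⟨hyv, hzv⟩)
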